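/- Chain rule for stream derivative (semantic form): let K be a field of characteristic 0 and p a polynomial in the variables x, y₁, ..., yₙ with coefficients in K. Then there exist polynomials q₀, q₁, ..., qₙ in the variables x, y₀₁,...,y₀ₙ, y₁,...,yₙ with coefficients in K such that for every tuple of streams σ = (σ₁,...,σₙ) over K, writing r₀ = (σ₁(0),...,σₙ(0)), one has (p(X, σ))' = q₀(X, r₀, σ) + Σᵢ₌₁ⁿ qᵢ(X, r₀, σ) · σᵢ'. -/

import Mathlib

/-!
Splitting off the constant coefficient, `σ = C σ(0) + X σ'`, gives the twisted Leibniz rule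
`(σ τ)' = σ' τ + σ(0) τ'`. Hence the polynomials `p` for which suitable `q₀, qᵢ` exist contain
the constants and the variables and are closed under sums and products: for `p₁ p₂` the factor
`σ(0)` is `p₁(0, r₀)`, a polynomial in `r₀`.
-/

/-- Stream derivative: remove the first coefficient. -/
noncomputable def sderiv {K : Type*} [Field K] (σ : PowerSeries K) : PowerSeries K :=
  PowerSeries.mk fun k => PowerSeries.coeff (k + 1) σ

/-- Variable set `x, y₀₁,...,y₀ₙ, y₁,...,yₙ`. -/
abbrev VarV (n : ℕ) := Unit ⊕ (Fin n ⊕ Fin n)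

/-- Evaluation of a polynomial in `x, y₁, ..., yₙ` (variable `0` playing the role of `x`)
at `x := X` and `yᵢ := σᵢ`. -/
noncomputable def polyEval {K : Type*} [Field K] {n : ℕ}
    (p : MvPolynomial (Fin (n + 1)) K) (σ : Fin n → PowerSeries K) : PowerSeries K :=
  MvPolynomial.aeval (Fin.cons PowerSeries.X σ) p

/-- Evaluation of a polynomial in `x, y₀, y` at `x := X`, `y₀ᵢ := C r₀ᵢ`, `yᵢ := σᵢ`. -/
noncomputable def evalV {K : Type*} [Field K] {n : ℕ}
    (q : MvPolynomial (VarV n) K) (r0 : Fin n → K) (σ : Fin n → PowerSeries K) :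
    PowerSeries K :=
  MvPolynomial.aeval
    (Sum.elim (fun _ => PowerSeries.X)
      (Sum.elim (fun i => PowerSeries.C (r0 i)) σ)) q

open PowerSeries

section StreamDerivative

variable {K : Type*} [Field K]

theorem eq_X_mul_sderiv_add_C (φ : PowerSeries K) : φ = X * sderiv φ + C (constantCoeff φ) :=
  eq_X_mul_shift_add_const φ

theorem sderiv_add (φ ψ : PowerSeries K) : sderiv (φ + ψ) = sderiv φ + sderiv ψ := by
  ext; simp [sderiv]

theorem sderiv_C (c : K) : sderiv (C c) = 0 := by
  ext; simp [sderiv]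

theorem sderiv_X : sderiv (X : PowerSeries K) = 1 := by
  ext k; simp [sderiv, coeff_X, coeff_one]

theorem sderiv_mul (φ ψ : PowerSeries K) :
    sderiv (φ * ψ) = sderiv φ * ψ + C (constantCoeff φ) * sderiv ψ := by
  refine X_mul_cancel (sub_eq_zero.mp ?_)
  have hφ := eq_X_mul_sderiv_add_C φ
  have hψ := eq_X_mul_sderiv_add_C ψ
  have hφψ := eq_X_mul_sderiv_add_C (φ * ψ)
  rw [map_mul, map_mul] at hφψ
  linear_combination ψ * hφ + C (constantCoeff φ) * hψ - hφψ

end StreamDerivative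

section ChainRule

variable {K : Type*} [Field K] {n : ℕ}

theorem evalV_add (q₁ q₂ : MvPolynomial (VarV n) K) (r0 : Fin n → K)
    (σ : Fin n → PowerSeries K) : evalV (q₁ + q₂) r0 σ = evalV q₁ r0 σ + evalV q₂ r0 σ :=
  map_add _ _ _

theorem evalV_mul (q₁ q₂ : MvPolynomial (VarV n) K) (r0 : Fin n → K)
    (σ : Fin n → PowerSeries K) : evalV (q₁ * q₂) r0 σ = evalV q₁ r0 σ * evalV q₂ r0 σ :=
  map_mul _ _ _

noncomputable def liftVarV (p : MvPolynomial (Fin (n + 1)) K) : MvPolynomial (VarV n) K :=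
  MvPolynomial.rename (Fin.cons (Sum.inl ()) (Sum.inr ∘ Sum.inr)) p

/-- The polynomial `p(0, y₀)`. -/
noncomputable def constCoeffVarV (p : MvPolynomial (Fin (n + 1)) K) : MvPolynomial (VarV n) K :=
  MvPolynomial.aeval (Fin.cons 0 (MvPolynomial.X ∘ Sum.inr ∘ Sum.inl)) p

theorem evalV_liftVarV (p : MvPolynomial (Fin (n + 1)) K) (r0 : Fin n → K)
    (σ : Fin n → PowerSeries K) : evalV (liftVarV p) r0 σ = polyEval p σ := by
  induction p using MvPolynomial.induction_on with
  | C a => simp [evalV, liftVarV, polyEval]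
  | add p q hp hq => simp_all [evalV, liftVarV, polyEval]
  | mul_X p j hp => induction j using Fin.cases <;> simp_all [evalV, liftVarV, polyEval]

theorem evalV_constCoeffVarV (p : MvPolynomial (Fin (n + 1)) K) (σ : Fin n → PowerSeries K) :
    evalV (constCoeffVarV p) (fun i => coeff 0 (σ i)) σ = C (constantCoeff (polyEval p σ)) := by
  induction p using MvPolynomial.induction_on with
  | C a => simp [evalV, constCoeffVarV, polyEval]
  | add p q hp hq => simp_all [evalV, constCoeffVarV, polyEval]
  | mul_X p j hp => induction j using Fin.cases <;> simp_all [evalV, constCoeffVarV, polyEval]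

def HasStreamChainRule (p : MvPolynomial (Fin (n + 1)) K) : Prop :=
  ∃ (q0 : MvPolynomial (VarV n) K) (q : Fin n → MvPolynomial (VarV n) K),
    ∀ σ : Fin n → PowerSeries K,
      sderiv (polyEval p σ) =
        evalV q0 (fun i => coeff 0 (σ i)) σ +
        ∑ i, evalV (q i) (fun j => coeff 0 (σ j)) σ * sderiv (σ i)

theorem hasStreamChainRule_C (a : K) :
    HasStreamChainRule (MvPolynomial.C a : MvPolynomial (Fin (n + 1)) K) :=
  ⟨0, 0, fun σ => by simp [polyEval, evalV, sderiv_C]⟩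

theorem hasStreamChainRule_X (j : Fin (n + 1)) :
    HasStreamChainRule (MvPolynomial.X j : MvPolynomial (Fin (n + 1)) K) := by
  induction j using Fin.cases with
  | zero => exact ⟨1, 0, fun σ => by simp [polyEval, evalV, sderiv_X]⟩
  | succ i => exact ⟨0, Pi.single i 1, fun σ => by simp [polyEval, evalV, Pi.single_apply]⟩

theorem HasStreamChainRule.add {p₁ p₂ : MvPolynomial (Fin (n + 1)) K}
    (h₁ : HasStreamChainRule p₁) (h₂ : HasStreamChainRule p₂) :
    HasStreamChainRule (p₁ + p₂) := by
  obtain ⟨a₀, a, ha⟩ := h₁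
  obtain ⟨b₀, b, hb⟩ := h₂
  refine ⟨a₀ + b₀, a + b, fun σ => ?_⟩
  have hadd : polyEval (p₁ + p₂) σ = polyEval p₁ σ + polyEval p₂ σ := map_add _ _ _
  simp only [hadd, sderiv_add, ha, hb, Pi.add_apply, evalV_add, add_mul, Finset.sum_add_distrib]
  ring

theorem HasStreamChainRule.mul {p₁ p₂ : MvPolynomial (Fin (n + 1)) K}
    (h₁ : HasStreamChainRule p₁) (h₂ : HasStreamChainRule p₂) :
    HasStreamChainRule (p₁ * p₂) := by
  obtain ⟨a₀, a, ha⟩ := h₁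
  obtain ⟨b₀, b, hb⟩ := h₂
  refine ⟨a₀ * liftVarV p₂ + constCoeffVarV p₁ * b₀,
    fun i => a i * liftVarV p₂ + constCoeffVarV p₁ * b i, fun σ => ?_⟩
  have hmul : polyEval (p₁ * p₂) σ = polyEval p₁ σ * polyEval p₂ σ := map_mul _ _ _
  simp only [hmul, sderiv_mul, ha, hb, evalV_add, evalV_mul, evalV_liftVarV,
    evalV_constCoeffVarV, add_mul, mul_add, Finset.sum_add_distrib, Finset.sum_mul,
    Finset.mul_sum]
  ring_nf

end ChainRule

theorem stream_chain_rule_general {K : Type*} [Field K] {n : ℕ}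
    (p : MvPolynomial (Fin (n + 1)) K) :
    ∃ (q0 : MvPolynomial (VarV n) K) (q : Fin n → MvPolynomial (VarV n) K),
      ∀ σ : Fin n → PowerSeries K,
        sderiv (polyEval p σ) =
          evalV q0 (fun i => PowerSeries.coeff 0 (σ i)) σ +
          ∑ i, evalV (q i) (fun j => PowerSeries.coeff 0 (σ j)) σ * sderiv (σ i) :=
  MvPolynomial.induction_on p hasStreamChainRule_C (fun _ _ => .add)
    fun _ j h => h.mul (hasStreamChainRule_X j)

/-- Chain rule for the stream derivative, semantic form. -/
theorem stream_chain_rule {K : Type*} [Field K] [CharZero K] {n : ℕ}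
    (p : MvPolynomial (Fin (n + 1)) K) :
    ∃ (q0 : MvPolynomial (VarV n) K) (q : Fin n → MvPolynomial (VarV n) K),
      ∀ σ : Fin n → PowerSeries K,
        sderiv (polyEval p σ) =
          evalV q0 (fun i => PowerSeries.coeff 0 (σ i)) σ +
          ∑ i, evalV (q i) (fun j => PowerSeries.coeff 0 (σ j)) σ * sderiv (σ i) :=
  stream_chain_rule_general p
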